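/- arXiv:2505.12518 — 2 statements merged into one kernel-verified Lean document; each statement's English description precedes it below -/
import Mathlib

section
/- For every finite simple graph G, the sigma index σ(G) is an even integer. -/
open Finset

variable {V : Type*} [Fintype V] [DecidableEq V]

/-- Albertson irregularity index. -/
def irr (G : SimpleGraph V) [DecidableRel G.Adj] : ℤ :=
  ∑ e ∈ G.edgeFinset,
    Sym2.lift ⟨fun u v => |(G.degree u : ℤ) - (G.degree v : ℤ)|,
      fun u v => abs_sub_comm _ _⟩ e

/-- Sigma irregularity index. -/
def sigmaIdx (G : SimpleGraph V) [DecidableRel G.Adj] : ℤ :=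
  ∑ e ∈ G.edgeFinset,
    Sym2.lift ⟨fun u v => ((G.degree u : ℤ) - (G.degree v : ℤ)) ^ 2,
      fun u v => by ring⟩ e

/-- First Zagreb index. -/
def M1 (G : SimpleGraph V) [DecidableRel G.Adj] : ℤ :=
  ∑ v : V, (G.degree v : ℤ) ^ 2

/-!
Modulo 2 we have `(a - b)² ≡ a + b`, so `σ(G) ≡ ∑_{uv ∈ E} (deg u + deg v)`. Each vertex `v`
occurs in exactly `deg v` edges, so this sum is `∑_v deg v · deg v ≡ ∑_v deg v = 2 |E|`.
-/

namespace SimpleGraph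

variable (G : SimpleGraph V) [DecidableRel G.Adj] {M : Type*} [AddCommMonoid M]

theorem sum_darts_fst_eq_sum_degree_nsmul (f : V → M) :
    ∑ d : G.Dart, f d.fst = ∑ v, G.degree v • f v := by
  rw [← sum_fiberwise univ (fun d : G.Dart => d.fst)]
  refine sum_congr rfl fun v _ => ?_
  rw [sum_congr rfl fun d hd => congrArg f (mem_filter.1 hd).2, sum_const,
    dart_fst_fiber_card_eq_degree]

theorem sum_darts_fst_eq_sum_edgeFinset (f : V → M) :
    ∑ d : G.Dart, f d.fst =
      ∑ e ∈ G.edgeFinset, Sym2.lift ⟨fun u v => f u + f v, fun _ _ => add_comm _ _⟩ e := by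
  rw [← sum_fiberwise_of_maps_to (t := G.edgeFinset) fun d _ => mem_edgeFinset.2 d.edge_mem]
  refine sum_congr rfl fun e he => ?_
  induction e with
  | h u v =>
    let d : G.Dart := ⟨(u, v), mem_edgeFinset.1 he⟩
    have hfiber : ({d' : G.Dart | d'.edge = s(u, v)} : Finset _) = {d, d.symm} := d.edge_fiber
    rw [hfiber, sum_pair d.symm_ne.symm]
    rfl

theorem sum_edgeFinset_lift_add_eq_sum_degree_nsmul (f : V → M) :
    ∑ e ∈ G.edgeFinset, Sym2.lift ⟨fun u v => f u + f v, fun _ _ => add_comm _ _⟩ e =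
      ∑ v, G.degree v • f v := by
  rw [← sum_darts_fst_eq_sum_edgeFinset, sum_darts_fst_eq_sum_degree_nsmul]

end SimpleGraph

theorem ZMod.sub_sq_eq_add_mod_two (a b : ZMod 2) : (a - b) ^ 2 = a + b := by
  revert a b; decide

theorem ZMod.nsmul_natCast_self_mod_two (n : ℕ) : n • (n : ZMod 2) = n := by
  rw [nsmul_eq_mul, ← sq, ZMod.pow_card]

theorem sigma_even (G : SimpleGraph V) [DecidableRel G.Adj] :
    Even (sigmaIdx G) := by
  rw [← ZMod.intCast_eq_zero_iff_even]
  calc ((sigmaIdx G : ℤ) : ZMod 2)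
      = ∑ e ∈ G.edgeFinset, Sym2.lift
          ⟨fun u v => (G.degree u : ZMod 2) + G.degree v, fun _ _ => add_comm _ _⟩ e := by
        rw [sigmaIdx, Int.cast_sum]
        refine sum_congr rfl fun e _ => ?_
        induction e with
        | h u v => push_cast [Sym2.lift_mk]; exact ZMod.sub_sq_eq_add_mod_two _ _
    _ = ∑ v, G.degree v • (G.degree v : ZMod 2) :=
        G.sum_edgeFinset_lift_add_eq_sum_degree_nsmul _
    _ = ((2 * #G.edgeFinset : ℕ) : ZMod 2) := by
        simp only [ZMod.nsmul_natCast_self_mod_two, ← Nat.cast_sum,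
          G.sum_degrees_eq_twice_card_edges]
    _ = 0 := by rw [Nat.cast_mul, ZMod.natCast_self, zero_mul]
end

section
/- Among all trees on n ≥ 2 vertices, the star S_n attains the maximum Albertson index; that is, for every tree T on n vertices, irr(T) ≤ (n-1)(n-2), with equality if T is the star. -/
open Finset

variable {V : Type*} [Fintype V] [DecidableEq V]

/-- The star graph on `n` vertices: vertex `0` is adjacent to all other vertices. -/
def starGraph (n : ℕ) : SimpleGraph (Fin n) where
  Adj u v := u ≠ v ∧ (u.val = 0 ∨ v.val = 0)
  symm := by constructor; intro u v ⟨h1, h2⟩; exact ⟨h1.symm, h2.symm⟩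
  loopless := by constructor; intro u ⟨h, _⟩; exact h rfl

instance (n : ℕ) : DecidableRel (starGraph n).Adj :=
  fun u v => inferInstanceAs (Decidable (u ≠ v ∧ (u.val = 0 ∨ v.val = 0)))

section Irregularity

variable {W : Type*} [Fintype W] {G : SimpleGraph W} [DecidableRel G.Adj]

lemma abs_degree_sub_degree_le {u v : W} (h : G.Adj u v) :
    |(G.degree u : ℤ) - G.degree v| ≤ Fintype.card W - 2 := by
  have hu := G.degree_pos_iff_exists_adj u |>.mpr ⟨v, h⟩
  have hv := G.degree_pos_iff_exists_adj v |>.mpr ⟨u, h.symm⟩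
  have hu_lt := G.degree_lt_card_verts u
  have hv_lt := G.degree_lt_card_verts v
  rw [abs_sub_le_iff]
  omega

lemma irr_le_card_edgeFinset_mul {c : ℤ}
    (h : ∀ u v, G.Adj u v → |(G.degree u : ℤ) - G.degree v| ≤ c) :
    irr G ≤ #G.edgeFinset * c := by
  rw [irr, ← nsmul_eq_mul]
  refine sum_le_card_nsmul _ _ _ fun e he => ?_
  induction e using Sym2.ind with
  | h u v => exact h u v (by simpa using he)

lemma irr_eq_card_edgeFinset_mul {c : ℤ}
    (h : ∀ u v, G.Adj u v → |(G.degree u : ℤ) - G.degree v| = c) :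
    irr G = #G.edgeFinset * c := by
  rw [irr, ← nsmul_eq_mul, ← sum_const]
  refine sum_congr rfl fun e he => ?_
  induction e using Sym2.ind with
  | h u v => exact h u v (by simpa using he)

lemma SimpleGraph.IsTree.irr_le (hG : G.IsTree) :
    irr G ≤ ((Fintype.card W : ℤ) - 1) * (Fintype.card W - 2) := by
  have hcard : (#G.edgeFinset : ℤ) = Fintype.card W - 1 := by
    have := hG.card_edgeFinset
    omega
  rw [← hcard]
  exact irr_le_card_edgeFinset_mul fun _ _ => abs_degree_sub_degree_le

end Irregularity

lemma irr_starGraph (r : V) :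
    irr (SimpleGraph.starGraph r) = ((Fintype.card V : ℤ) - 1) * (Fintype.card V - 2) := by
  have hcard : (#(SimpleGraph.starGraph r).edgeFinset : ℤ) = Fintype.card V - 1 := by
    have := (SimpleGraph.isTree_starGraph r).card_edgeFinset
    omega
  rw [← hcard]
  refine irr_eq_card_edgeFinset_mul fun u v huv => ?_
  have hV : 1 < Fintype.card V := Fintype.one_lt_card_iff.mpr ⟨u, v, huv.ne⟩
  obtain ⟨hne, rfl | rfl⟩ := SimpleGraph.starGraph_adj.mp huv
  · rw [SimpleGraph.degree_starGraph_center, SimpleGraph.degree_starGraph_of_ne_center hne.symm,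
      abs_of_nonneg] <;> omega
  · rw [SimpleGraph.degree_starGraph_center, SimpleGraph.degree_starGraph_of_ne_center hne,
      abs_of_nonpos] <;> omega

lemma starGraph_eq_starGraph_zero (n : ℕ) (hn : 0 < n) :
    starGraph n = SimpleGraph.starGraph (⟨0, hn⟩ : Fin n) := by
  ext u v
  simp [starGraph, Fin.ext_iff]

theorem star_maximizes_irr (n : ℕ) (hn : 2 ≤ n) :
    (∀ (T : SimpleGraph (Fin n)) (inst : DecidableRel T.Adj),
        T.IsTree → @irr (Fin n) _ T inst ≤ ((n : ℤ) - 1) * ((n : ℤ) - 2)) ∧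
      (starGraph n).IsTree ∧
      irr (starGraph n) = ((n : ℤ) - 1) * ((n : ℤ) - 2) := by
  have hstar := starGraph_eq_starGraph_zero n (by omega)
  refine ⟨fun T _ hT => by simpa using hT.irr_le, hstar ▸ SimpleGraph.isTree_starGraph _, ?_⟩
  have := irr_starGraph (⟨0, by omega⟩ : Fin n)
  rw [Fintype.card_fin] at this
  -- the two `DecidableRel` instances are identified by subsingleton elimination
  convert this
end
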